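/- If ρ ∈ S_r has cycle decomposition into c disjoint cycles of lengths r₁, …, r_c (r₁ + ⋯ + r_c = r), then the full contraction of the invariant tensor Φ(ρ) ∈ E^{⊗r} (E = Mₙ(k), identified with End(V^{⊗r}) via the trace pairing) against matrices X₁, …, X_r is a product of c traces of products of the Xᵢ: concretely, for ρ with cycles (a₁ a₂ ⋯ a_{r₁})(b₁ ⋯ b_{r₂})⋯, the contraction equals Tr(X_{a₁}⋯X_{a_{r₁}})·Tr(X_{b₁}⋯X_{b_{r₂}})⋯. -/

import Mathlib

open PiTensorProduct
open scoped TensorProduct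

/-- The operator `Φ(ρ)` on `V^{⊗ι}` permuting tensor factors according to `ρ`. -/
noncomputable def permTensorMap' (k : Type*) [Field k] (V : Type*) [AddCommGroup V]
    [Module k V] (ι : Type*) [DecidableEq ι] [Fintype ι] (ρ : Equiv.Perm ι) :
    (⨂[k] (_ : ι), V) →ₗ[k] ⨂[k] (_ : ι), V :=
  (PiTensorProduct.reindex k (fun _ : ι => V) ρ).toLinearMap

/-! In the basis of `V^{⊗r}` given by tensor products of basis vectors indexed by multi-indices
`p`, the diagonal coefficient of `Φ(ρ) ∘ (⊗ Xᵢ)` at `p` is `∏ᵢ (Xᵢ)_{p(ρ i), p i}`, so the trace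
is a sum over all `p`. When `ρ` is a product of disjoint cycles this sum factors over the cycles,
and along a single cycle it is the expansion of `Tr(X_{a₁} ⋯ X_{a_L})` as a sum over closed walks
of length `L` in the index set. -/

namespace Matrix

variable {m R : Type*} [Fintype m] [DecidableEq m] [CommSemiring R]

/-- A term of the sum is the walk `x = v₀, v₁, …, v_L` with `v_{j+1} = p j`. -/
theorem list_prod_ofFn_mul_apply {L : ℕ} (A : Fin L → Matrix m m R) (B : Matrix m m R) (x y : m) :
    ((List.ofFn A).prod * B) x y =
      ∑ p : Fin L → m, (∏ j, A j ((Fin.cons x p : Fin (L + 1) → m) j.castSucc) (p j)) *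
        B ((Fin.cons x p : Fin (L + 1) → m) (Fin.last L)) y := by
  induction L generalizing x with
  | zero => simp
  | succ L ih =>
    rw [List.ofFn_succ, List.prod_cons, Matrix.mul_assoc, Matrix.mul_apply,
      ← (Fin.consEquiv fun _ => m).sum_comp, Fintype.sum_prod_type]
    refine Finset.sum_congr rfl fun z _ => ?_
    rw [ih, Finset.mul_sum]
    refine Finset.sum_congr rfl fun p _ => ?_
    simp only [Fin.consEquiv_apply, Fin.prod_univ_succ, Fin.castSucc_zero, Fin.cons_zero,
      Fin.cons_succ, ← Fin.succ_castSucc, ← Fin.succ_last, mul_assoc]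

theorem trace_list_prod_ofFn {L : ℕ} [NeZero L] (A : Fin L → Matrix m m R) :
    trace (List.ofFn A).prod = ∑ p : Fin L → m, ∏ j, A j (p ((finRotate L).symm j)) (p j) := by
  obtain ⟨L, rfl⟩ := Nat.exists_eq_add_one_of_ne_zero (NeZero.ne L)
  have cons_last_castSucc (p : Fin (L + 1) → m) (j : Fin (L + 1)) :
      (Fin.cons (p (Fin.last L)) p : Fin (L + 2) → m) j.castSucc =
        p ((finRotate (L + 1)).symm j) := by
    refine Fin.cases ?_ (fun i => ?_) j
    · rw [Fin.castSucc_zero, Fin.cons_zero, (Equiv.symm_apply_eq _).mpr finRotate_last.symm]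
    · have : finRotate (L + 1) i.castSucc = i.succ := by
        rw [finRotate_apply, Fin.coeSucc_eq_succ]
      rw [← Fin.succ_castSucc, Fin.cons_succ, (Equiv.symm_apply_eq _).mpr this.symm]
  calc trace (List.ofFn A).prod
      = ∑ x, ((List.ofFn A).prod * (1 : Matrix m m R)) x x := by
        simp only [trace, diag_apply, Matrix.mul_one]
    _ = ∑ x, ∑ p : Fin (L + 1) → m,
          (∏ j, A j ((Fin.cons x p : Fin (L + 2) → m) j.castSucc) (p j)) *
            (1 : Matrix m m R) ((Fin.cons x p : Fin (L + 2) → m) (Fin.last (L + 1))) x := by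
        simp only [list_prod_ofFn_mul_apply]
    _ = _ := by
        rw [Finset.sum_comm]
        refine Finset.sum_congr rfl fun p _ => ?_
        simp [one_apply, cons_last_castSucc]

end Matrix

namespace PiTensorProduct

variable {R M ι κ : Type*} [CommSemiring R] [AddCommMonoid M] [Module R M]
  [Fintype ι] [DecidableEq ι] [Fintype κ] [DecidableEq κ]

theorem trace_reindex_comp_map (b : Module.Basis κ R M) (σ : Equiv.Perm ι)
    (f : ι → Module.End R M) :
    LinearMap.trace R (⨂[R] (_ : ι), M)
        ((reindex R (fun _ => M) σ).toLinearMap ∘ₗ map f) =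
      ∑ p : ι → κ, ∏ i, LinearMap.toMatrix b b (f i) (p (σ i)) (p i) := by
  rw [LinearMap.trace_eq_matrix_trace R (Basis.piTensorProduct fun _ => b)]
  refine Finset.sum_congr rfl fun p _ => ?_
  rw [Matrix.diag_apply, LinearMap.toMatrix_apply, Basis.piTensorProduct_apply,
    LinearMap.comp_apply, map_tprod, LinearEquiv.coe_coe, reindex_tprod,
    Basis.piTensorProduct_repr_tprod_apply, ← Equiv.prod_comp σ]
  simp only [Equiv.symm_apply_apply, LinearMap.toMatrix_apply]

end PiTensorProduct

theorem LinearMap.trace_list_prod_ofFn {R M κ : Type*} [CommSemiring R] [AddCommMonoid M]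
    [Module R M] [Fintype κ] [DecidableEq κ] (b : Module.Basis κ R M) {L : ℕ} [NeZero L]
    (f : Fin L → Module.End R M) :
    LinearMap.trace R M (List.ofFn f).prod =
      ∑ p : Fin L → κ, ∏ j, LinearMap.toMatrix b b (f j) (p ((finRotate L).symm j)) (p j) := by
  have h := map_list_prod (LinearMap.toMatrixAlgEquiv b) (List.ofFn f)
  rw [List.map_ofFn] at h
  rw [LinearMap.trace_eq_matrix_trace R b]
  exact (congrArg Matrix.trace h).trans (Matrix.trace_list_prod_ofFn _)

theorem stmt_19_general (k : Type*) [Field k] (n c : ℕ) (L : Fin c → ℕ)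
    (hL : ∀ i, 0 < L i) (X : (Σ i : Fin c, Fin (L i)) → Module.End k (Fin n → k)) :
    LinearMap.trace k (⨂[k] (_ : Σ i : Fin c, Fin (L i)), (Fin n → k))
        (permTensorMap' k (Fin n → k) (Σ i : Fin c, Fin (L i))
            (Equiv.sigmaCongrRight fun i => ((finRotate (L i))⁻¹ : Equiv.Perm (Fin (L i))))
          ∘ₗ PiTensorProduct.map X)
      = ∏ i : Fin c,
          LinearMap.trace k (Fin n → k) (List.ofFn fun j : Fin (L i) => X ⟨i, j⟩).prod := by
  have (i : Fin c) : NeZero (L i) := ⟨(hL i).ne'⟩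
  let b := Pi.basisFun k (Fin n)
  rw [permTensorMap', PiTensorProduct.trace_reindex_comp_map b]
  -- a multi-index on `Σ i, Fin (L i)` is one multi-index per cycle, so the sum factors
  simp only [LinearMap.trace_list_prod_ofFn b, Fintype.prod_sum,
    ← (Equiv.piCurry fun _ _ => Fin n).symm.sum_comp, Fintype.prod_sigma]
  rfl

/-- If `ρ ∈ S_r` decomposes into `c` disjoint cycles of lengths `L₁, …, L_c`
(here realized canonically on the index set `Σ i : Fin c, Fin (L i)`, the cycles being the
blocks `{i} × Fin (L i)` cyclically rotated), then the full contraction of the invariant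
tensor `Φ(ρ) ∈ E^{⊗r}` against matrices `(X_{i,j})` — i.e. the trace pairing
`Tr_{V^{⊗r}} (Φ(ρ) ∘ (⊗_{i,j} X_{i,j}))` under `E^{⊗r} ≅ End(V^{⊗r})` — equals the product
over the `c` cycles of the traces of the products of the `X`'s along each cycle. -/
theorem stmt_19 (k : Type*) [Field k] [CharZero k] (n c : ℕ) (L : Fin c → ℕ)
    (hL : ∀ i, 0 < L i) (X : (Σ i : Fin c, Fin (L i)) → Module.End k (Fin n → k)) :
    LinearMap.trace k (⨂[k] (_ : Σ i : Fin c, Fin (L i)), (Fin n → k))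
        (permTensorMap' k (Fin n → k) (Σ i : Fin c, Fin (L i))
            (Equiv.sigmaCongrRight fun i => ((finRotate (L i))⁻¹ : Equiv.Perm (Fin (L i))))
          ∘ₗ PiTensorProduct.map X)
      = ∏ i : Fin c,
          LinearMap.trace k (Fin n → k) (List.ofFn fun j : Fin (L i) => X ⟨i, j⟩).prod :=
  stmt_19_general k n c L hL X
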